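/- Let s be a complex number with Re(s) > 0 and let k > 2 be real. With p(v) = (v/π)·(2π − v·√(4−v²) − 4·arcsin(v/2)) for 0 ≤ v ≤ 2, one has ∫₀² p(v) · ₂F₁(−s/2, −s/2; 1; v²/k²) dv = ₃F₂(−s/2, −s/2, 3/2; 2, 3; 4/k²). -/

import Mathlib

open MeasureTheory Real

/-- The Pochhammer symbol `(a)_n = a (a+1) ⋯ (a+n-1)` for a complex number `a`. -/
noncomputable def cpoch (a : ℂ) (n : ℕ) : ℂ := ∏ i ∈ Finset.range n, (a + i)

/-- The Gauss hypergeometric series `₂F₁(a,b; c; z)`. -/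
noncomputable def F21 (a b c z : ℂ) : ℂ :=
  ∑' n : ℕ, (cpoch a n * cpoch b n) / cpoch c n * z ^ n / (n.factorial : ℂ)

/-- The generalized hypergeometric series `₃F₂(a₁,a₂,a₃; b₁,b₂; z)`. -/
noncomputable def F32 (a₁ a₂ a₃ b₁ b₂ z : ℂ) : ℂ :=
  ∑' n : ℕ, (cpoch a₁ n * cpoch a₂ n * cpoch a₃ n) / (cpoch b₁ n * cpoch b₂ n)
    * z ^ n / (n.factorial : ℂ)

/-- The density of `|X + Y|` for `X, Y` uniform on the unit disk, on `[0, 2]`. -/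
noncomputable def pT1 (v : ℝ) : ℝ :=
  (v / π) * (2 * π - v * Real.sqrt (4 - v ^ 2) - 4 * Real.arcsin (v / 2))

open Set Filter Topology Interval intervalIntegral

/-!
Expanding `₂F₁(a, a; 1; v²/k²)` as a power series, the coefficients times `(4/k²)ⁿ` are summable
because `4/k² < 1`, so the series can be integrated term by term against the bounded density.
The even moments of the density are `2 (2n+1)! / ((n+1)! (n+2)!)`: we have `p(v) = (2v/π) A(v)`
with `A` the lens area, and `A' = -√(4 - v²)`, `A(2) = 0`, so one integration by parts turns the
moment into the Wallis-type integral `∫₀² v^(2n+2) √(4 - v²) dv = π (2n+2)! / ((n+1)! (n+2)!)`.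
Since `(3/2)ₙ = (2n+1)! / (4ⁿ n!)`, `(2)ₙ = (n+1)!` and `(3)ₙ = (n+2)!/2`, these moments turn the
`₂F₁` coefficients into the `₃F₂` coefficients.
-/

lemma cpoch_succ (a : ℂ) (n : ℕ) : cpoch a (n + 1) = cpoch a n * (a + n) :=
  Finset.prod_range_succ _ _

lemma cpoch_natCast_add_one_mul_factorial (m n : ℕ) :
    cpoch (m + 1) n * m.factorial = (m + n).factorial := by
  induction n with
  | zero => simp [cpoch]
  | succ n ih =>
    rw [cpoch_succ, mul_right_comm, ih, ← add_assoc, Nat.factorial_succ (m + n)]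
    push_cast
    ring

lemma four_pow_mul_factorial_mul_cpoch_three_halves (n : ℕ) :
    4 ^ n * n.factorial * cpoch (3 / 2) n = (2 * n + 1).factorial := by
  induction n with
  | zero => simp [cpoch]
  | succ n ih =>
    rw [cpoch_succ, show 2 * (n + 1) + 1 = 2 * n + 1 + 1 + 1 by ring,
      Nat.factorial_succ (2 * n + 1 + 1), Nat.factorial_succ (2 * n + 1), Nat.factorial_succ n]
    push_cast
    linear_combination (2 * (n : ℂ) + 2) * (2 * n + 3) * ih

noncomputable def F21coeff (a b c : ℂ) (n : ℕ) : ℂ :=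
  cpoch a n * cpoch b n / cpoch c n / n.factorial

lemma F21_eq_tsum (a b c z : ℂ) : F21 a b c z = ∑' n, F21coeff a b c n * z ^ n :=
  tsum_congr fun n => by rw [F21coeff]; ring

lemma F21coeff_succ (a b c : ℂ) (n : ℕ) :
    F21coeff a b c (n + 1) = F21coeff a b c n * ((a + n) / (c + n) * ((b + n) / (1 + n))) := by
  simp only [F21coeff, cpoch_succ, Nat.factorial_succ, Nat.cast_mul, Nat.cast_succ,
    div_eq_mul_inv, mul_inv]
  ring

lemma summable_norm_F21coeff_mul_pow (a b c : ℂ) {r : ℝ} (hr₀ : 0 ≤ r) (hr₁ : r < 1) :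
    Summable fun n => ‖F21coeff a b c n‖ * r ^ n := by
  have hratio : Tendsto (fun n : ℕ => (a + n) / (c + n) * ((b + n) / (1 + n))) atTop (𝓝 1) := by
    have h := fun x y : ℂ => tendsto_add_mul_div_add_mul_atTop_nhds x y 1 one_ne_zero
    simpa using (h a c).mul (h b 1)
  have hlim :
      Tendsto (fun n : ℕ => ‖(a + n) / (c + n) * ((b + n) / (1 + n))‖ * r) atTop (𝓝 r) := by
    simpa using hratio.norm.mul_const r
  refine summable_of_ratio_norm_eventually_le (r := (1 + r) / 2) (by linarith) ?_
  filter_upwards [hlim.eventually_le_const (by linarith : r < (1 + r) / 2)] with n hn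
  rw [norm_of_nonneg (mul_nonneg (norm_nonneg _) (pow_nonneg hr₀ _)),
    norm_of_nonneg (mul_nonneg (norm_nonneg _) (pow_nonneg hr₀ _)), F21coeff_succ, norm_mul,
    pow_succ]
  calc _ = ‖F21coeff a b c n‖ * r ^ n * (‖(a + n) / (c + n) * ((b + n) / (1 + n))‖ * r) := by
        ring
    _ ≤ ‖F21coeff a b c n‖ * r ^ n * ((1 + r) / 2) := by gcongr
    _ = _ := by ring

theorem intervalIntegral_mul_tsum_pow {a b r : ℝ} {p φ : ℝ → ℂ} {c : ℕ → ℂ}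
    (hp : IntervalIntegrable p volume a b) (hφ : Continuous φ)
    (hφr : ∀ v ∈ Ι a b, ‖φ v‖ ≤ r) (hc : Summable fun n => ‖c n‖ * r ^ n) :
    ∫ v in a..b, p v * ∑' n, c n * φ v ^ n = ∑' n, c n * ∫ v in a..b, p v * φ v ^ n := by
  have hterm (v : ℝ) (hv : v ∈ Ι a b) (n : ℕ) : ‖c n * φ v ^ n‖ ≤ ‖c n‖ * r ^ n := by
    rw [norm_mul, norm_pow]
    gcongr
    exact hφr v hv
  have hsum := hasSum_integral_of_dominated_convergence
    (F := fun n v => p v * (c n * φ v ^ n)) (fun n v => ‖p v‖ * (‖c n‖ * r ^ n))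
    (fun n => hp.def'.aestronglyMeasurable.mul ((hφ.pow n).aestronglyMeasurable.const_mul _))
    (fun n => ae_of_all _ fun v hv => by
      rw [norm_mul]; exact mul_le_mul_of_nonneg_left (hterm v hv n) (norm_nonneg _))
    (ae_of_all _ fun v _ => hc.mul_left _)
    (by simp_rw [tsum_mul_left]; exact hp.norm.mul_const _)
    (ae_of_all _ fun v hv => (Summable.of_norm_bounded hc (hterm v hv)).hasSum.mul_left (p v))
  rw [← hsum.tsum_eq]
  congr 1 with n
  rw [← intervalIntegral.integral_const_mul]
  congr 1 with v
  ring

lemma hasDerivAt_sqrt_four_sub_sq {v : ℝ} (h₁ : -2 < v) (h₂ : v < 2) :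
    HasDerivAt (fun v : ℝ => √(4 - v ^ 2)) (-v / √(4 - v ^ 2)) v := by
  have hpos : 0 < 4 - v ^ 2 := by nlinarith
  convert ((hasDerivAt_pow 2 v).const_sub 4).sqrt hpos.ne' using 1
  have hs : √(4 - v ^ 2) ≠ 0 := (sqrt_pos.2 hpos).ne'
  field_simp
  push_cast
  ring

/-- The area of the intersection of two unit disks whose centres are `v` apart. -/
noncomputable def lensArea (v : ℝ) : ℝ := 2 * arccos (v / 2) - v / 2 * √(4 - v ^ 2)

lemma pT1_eq_mul_lensArea (v : ℝ) : pT1 v = 2 * v / π * lensArea v := by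
  rw [pT1, lensArea, arccos_eq_pi_div_two_sub_arcsin]
  ring

lemma continuous_lensArea : Continuous lensArea := by
  unfold lensArea
  fun_prop

lemma lensArea_two : lensArea 2 = 0 := by
  norm_num [lensArea]

lemma hasDerivAt_lensArea {v : ℝ} (h₁ : -2 < v) (h₂ : v < 2) :
    HasDerivAt lensArea (-√(4 - v ^ 2)) v := by
  have hpos : 0 < 4 - v ^ 2 := by nlinarith
  have hsqrt : √(1 - (v / 2) ^ 2) = √(4 - v ^ 2) / 2 := by
    rw [show 1 - (v / 2) ^ 2 = (4 - v ^ 2) / 2 ^ 2 by ring, sqrt_div' _ (by positivity),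
      sqrt_sq (by norm_num)]
  have harccos := (hasDerivAt_arccos (x := v / 2) (by linarith) (by linarith)).comp v
    ((hasDerivAt_id v).div_const 2)
  refine ((harccos.const_mul 2).sub
    (((hasDerivAt_id v).div_const 2).mul (hasDerivAt_sqrt_four_sub_sq h₁ h₂))).congr_deriv ?_
  have hs : √(4 - v ^ 2) ≠ 0 := (sqrt_pos.2 hpos).ne'
  rw [hsqrt]
  field_simp
  rw [sq_sqrt hpos.le]
  simp only [id_eq]
  ring

lemma integral_sqrt_four_sub_sq : ∫ v in (0 : ℝ)..2, √(4 - v ^ 2) = π := by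
  rw [integral_eq_sub_of_hasDeriv_right_of_le zero_le_two (f := fun v => -lensArea v)
    continuous_lensArea.neg.continuousOn
    (fun v hv => ((hasDerivAt_lensArea (by linarith [hv.1]) hv.2).neg.congr_deriv
      (neg_neg _)).hasDerivWithinAt)
    ((by fun_prop : Continuous fun v : ℝ => √(4 - v ^ 2)).intervalIntegrable _ _)]
  norm_num [lensArea_two, lensArea]
  ring

lemma integral_pow_add_two_mul_sqrt_four_sub_sq (j : ℕ) :
    (j + 4) * ∫ v in (0 : ℝ)..2, v ^ (j + 2) * √(4 - v ^ 2) =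
      4 * (j + 1) * ∫ v in (0 : ℝ)..2, v ^ j * √(4 - v ^ 2) := by
  have hderiv (v : ℝ) (hv : v ∈ Ioo 0 2) :
      HasDerivAt (fun v => v ^ (j + 1) * (4 - v ^ 2) * √(4 - v ^ 2))
        (4 * (j + 1) * (v ^ j * √(4 - v ^ 2)) - (j + 4) * (v ^ (j + 2) * √(4 - v ^ 2))) v := by
    have hpos : 0 < 4 - v ^ 2 := by nlinarith [hv.1, hv.2]
    have hs : √(4 - v ^ 2) ≠ 0 := (sqrt_pos.2 hpos).ne'
    refine (((hasDerivAt_pow (j + 1) v).fun_mul ((hasDerivAt_pow 2 v).const_sub 4)).fun_mul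
      (hasDerivAt_sqrt_four_sub_sq (by linarith [hv.1]) hv.2)).congr_deriv ?_
    field_simp
    rw [sq_sqrt hpos.le]
    push_cast
    ring
  have hFTC := integral_eq_sub_of_hasDeriv_right_of_le zero_le_two (by fun_prop)
    (fun v hv => (hderiv v hv).hasDerivWithinAt)
    ((by fun_prop : Continuous _).intervalIntegrable _ _)
  rw [integral_sub ((by fun_prop : Continuous _).intervalIntegrable _ _)
    ((by fun_prop : Continuous _).intervalIntegrable _ _), intervalIntegral.integral_const_mul,
    intervalIntegral.integral_const_mul] at hFTC
  norm_num at hFTC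
  linarith

lemma integral_pow_two_mul_mul_sqrt_four_sub_sq (m : ℕ) :
    ∫ v in (0 : ℝ)..2, v ^ (2 * m) * √(4 - v ^ 2) =
      π * (2 * m).factorial / (m.factorial * (m + 1).factorial) := by
  induction m with
  | zero => simpa using integral_sqrt_four_sub_sq
  | succ m ih =>
    have hrec := integral_pow_add_two_mul_sqrt_four_sub_sq (2 * m)
    rw [show 2 * m + 2 = 2 * (m + 1) by ring, ih] at hrec
    push_cast at hrec
    rw [← mul_right_inj' (by positivity : (2 * m + 4 : ℝ) ≠ 0), hrec,
      show 2 * (m + 1) = 2 * m + 1 + 1 by ring, Nat.factorial_succ (2 * m + 1),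
      Nat.factorial_succ (2 * m), Nat.factorial_succ (m + 1), Nat.factorial_succ m]
    push_cast
    field_simp
    ring

lemma integral_pow_mul_lensArea (m : ℕ) :
    (m + 1) * ∫ v in (0 : ℝ)..2, v ^ m * lensArea v =
      ∫ v in (0 : ℝ)..2, v ^ (m + 1) * √(4 - v ^ 2) := by
  have hparts := integral_mul_deriv_eq_deriv_mul_of_hasDerivAt
    (a := 0) (b := 2) (u := lensArea) (u' := fun v => -√(4 - v ^ 2))
    (v := fun v => v ^ (m + 1) / (m + 1)) (v' := fun v => v ^ m)
    continuous_lensArea.continuousOn (by fun_prop)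
    (fun v hv => by
      rw [min_eq_left zero_le_two, max_eq_right zero_le_two] at hv
      exact hasDerivAt_lensArea (by linarith [hv.1]) hv.2)
    (fun v _ => by
      convert (hasDerivAt_pow (m + 1) v).div_const ((m : ℝ) + 1) using 1
      field_simp
      push_cast
      ring)
    ((by fun_prop : Continuous _).intervalIntegrable _ _)
    ((by fun_prop : Continuous _).intervalIntegrable _ _)
  rw [lensArea_two, zero_pow m.succ_ne_zero] at hparts
  simp only [zero_mul, zero_div, mul_zero, sub_self, zero_sub, neg_mul,
    intervalIntegral.integral_neg, neg_neg] at hparts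
  calc (m + 1) * ∫ v in (0 : ℝ)..2, v ^ m * lensArea v
      = (m + 1) * ∫ v in (0 : ℝ)..2, √(4 - v ^ 2) * (v ^ (m + 1) / (m + 1)) := by
        simp_rw [mul_comm (_ ^ m), hparts]
    _ = _ := by
        rw [← intervalIntegral.integral_const_mul]
        congr 1 with v
        field_simp

lemma integral_pT1_mul_pow_two_mul (n : ℕ) :
    ∫ v in (0 : ℝ)..2, pT1 v * v ^ (2 * n) =
      2 * (2 * n + 1).factorial / ((n + 1).factorial * (n + 2).factorial) := by
  have hparts := integral_pow_mul_lensArea (2 * n + 1)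
  rw [show 2 * n + 1 + 1 = 2 * (n + 1) by ring,
    integral_pow_two_mul_mul_sqrt_four_sub_sq] at hparts
  push_cast at hparts
  have hI : ∫ v in (0 : ℝ)..2, v ^ (2 * n + 1) * lensArea v =
      π * (2 * (n + 1)).factorial / ((n + 1).factorial * (n + 1 + 1).factorial) / (2 * n + 2) := by
    rw [eq_div_iff (by positivity), ← hparts]
    ring
  calc ∫ v in (0 : ℝ)..2, pT1 v * v ^ (2 * n)
      = 2 / π * ∫ v in (0 : ℝ)..2, v ^ (2 * n + 1) * lensArea v := by
        rw [← intervalIntegral.integral_const_mul]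
        congr 1 with v
        rw [pT1_eq_mul_lensArea]
        ring
    _ = _ := by
        rw [hI, show 2 * (n + 1) = 2 * n + 1 + 1 by ring, Nat.factorial_succ (2 * n + 1)]
        push_cast
        field_simp
        ring

lemma integral_pT1_mul_sq_div_sq_pow (k : ℝ) (n : ℕ) :
    ∫ v in (0 : ℝ)..2, (pT1 v : ℂ) * ((v ^ 2 / k ^ 2 : ℝ) : ℂ) ^ n =
      ((2 * (2 * n + 1).factorial / ((n + 1).factorial * (n + 2).factorial) : ℝ) : ℂ) /
        (k : ℂ) ^ (2 * n) := by
  have hintegrand (v : ℝ) : (pT1 v : ℂ) * ((v ^ 2 / k ^ 2 : ℝ) : ℂ) ^ n =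
      ((pT1 v * v ^ (2 * n) / k ^ (2 * n) : ℝ) : ℂ) := by
    push_cast
    ring
  simp_rw [hintegrand]
  rw [intervalIntegral.integral_ofReal, intervalIntegral.integral_div,
    integral_pT1_mul_pow_two_mul]
  push_cast
  ring

lemma F21coeff_one_mul_factorial_ratio (a b : ℂ) (n : ℕ) :
    F21coeff a b 1 n * (2 * (2 * n + 1).factorial / ((n + 1).factorial * (n + 2).factorial)) =
      cpoch a n * cpoch b n * cpoch (3 / 2) n / (cpoch 2 n * cpoch 3 n) * 4 ^ n / n.factorial := by
  have hfact (m : ℕ) : (m.factorial : ℂ) ≠ 0 := Nat.cast_ne_zero.2 m.factorial_ne_zero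
  have h1 := cpoch_natCast_add_one_mul_factorial 0 n
  have h2 := cpoch_natCast_add_one_mul_factorial 1 n
  have h3 := cpoch_natCast_add_one_mul_factorial 2 n
  norm_num [add_comm _ n] at h1 h2 h3
  have h32 : cpoch (3 / 2) n = (2 * n + 1).factorial / (4 ^ n * n.factorial) := by
    rw [eq_div_iff (by simp [hfact]), mul_comm]
    exact four_pow_mul_factorial_mul_cpoch_three_halves n
  rw [F21coeff, h1, h2, eq_div_of_mul_eq two_ne_zero h3, h32]
  field_simp

theorem integral_pT1_mul_F21_general (s : ℂ) (k : ℝ) (hk : 2 < k) :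
    ∫ v in (0 : ℝ)..2,
        (pT1 v : ℂ) * F21 (-(s / 2)) (-(s / 2)) 1 (((v ^ 2 / k ^ 2 : ℝ)) : ℂ) =
      F32 (-(s / 2)) (-(s / 2)) (3/2) 2 3 (4 / (k : ℂ) ^ 2) := by
  have hr : 4 / k ^ 2 < 1 := by
    rw [div_lt_one (by positivity)]
    nlinarith
  have hbound : ∀ v ∈ Ι (0 : ℝ) 2, ‖((v ^ 2 / k ^ 2 : ℝ) : ℂ)‖ ≤ 4 / k ^ 2 := by
    intro v hv
    rw [uIoc_of_le zero_le_two] at hv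
    rw [Complex.norm_real, norm_of_nonneg (by positivity)]
    gcongr
    nlinarith [hv.1, hv.2]
  have hpT1 : Continuous fun v => (pT1 v : ℂ) := by
    unfold pT1
    fun_prop
  simp_rw [F21_eq_tsum]
  rw [intervalIntegral_mul_tsum_pow (hpT1.intervalIntegrable _ _) (by fun_prop) hbound
    (summable_norm_F21coeff_mul_pow _ _ _ (by positivity) hr), F32]
  refine tsum_congr fun n => ?_
  rw [integral_pT1_mul_sq_div_sq_pow]
  push_cast
  rw [mul_div_assoc', F21coeff_one_mul_factorial_ratio]
  ring

theorem integral_pT1_mul_F21 (s : ℂ) (hs : 0 < s.re) (k : ℝ) (hk : 2 < k) :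
    ∫ v in (0 : ℝ)..2,
        (pT1 v : ℂ) * F21 (-(s / 2)) (-(s / 2)) 1 (((v ^ 2 / k ^ 2 : ℝ)) : ℂ) =
      F32 (-(s / 2)) (-(s / 2)) (3/2) 2 3 (4 / (k : ℂ) ^ 2) :=
  integral_pT1_mul_F21_general s k hk
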